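/- If G is a simple graph with pt_-(G) ≤ 2, then th_-(G) = Z_-(G) + pt_-(G). -/

import Mathlib

open SimpleGraph

/-- One round of skew zero forcing: every vertex (blue or white) with exactly one
white neighbor colors that neighbor blue. -/
def skewStep {V : Type*} (G : SimpleGraph V) (B : Set V) : Set V :=
  B ∪ {w | ∃ v, G.Adj v w ∧ ∀ u, G.Adj v u → u ∉ B → u = w}

/-- The set of blue vertices after `n` rounds of skew zero forcing starting from `S`. -/
def skewIter {V : Type*} (G : SimpleGraph V) (S : Set V) : ℕ → Set V
  | 0 => S
  | n + 1 => skewStep G (skewIter G S n)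

/-- `S` is a skew zero forcing set of `G`. -/
def IsSkewZFS {V : Type*} (G : SimpleGraph V) (S : Set V) : Prop :=
  ∃ n, skewIter G S n = Set.univ

/-- The skew propagation time `pt₋(G;S)`: the number of rounds needed for all
vertices to become blue. -/
noncomputable def skewPt {V : Type*} (G : SimpleGraph V) (S : Set V) : ℕ :=
  sInf {n | skewIter G S n = Set.univ}

/-- The skew throttling number `th₋(G)`. -/
noncomputable def skewTh {V : Type*} (G : SimpleGraph V) : ℕ :=
  sInf {m | ∃ S : Set V, IsSkewZFS G S ∧ m = S.ncard + skewPt G S}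

/-- The skew throttling number over sets of size `k`, `th₋(G,k)`. -/
noncomputable def skewThK {V : Type*} (G : SimpleGraph V) (k : ℕ) : ℕ :=
  sInf {m | ∃ S : Set V, IsSkewZFS G S ∧ S.ncard = k ∧ m = S.ncard + skewPt G S}

/-- The skew zero forcing number `Z₋(G)`. -/
noncomputable def skewZ {V : Type*} (G : SimpleGraph V) : ℕ :=
  sInf {m | ∃ S : Set V, IsSkewZFS G S ∧ m = S.ncard}

/-- The skew propagation time `pt₋(G)`: minimum propagation time over minimum
skew zero forcing sets. -/
noncomputable def skewPtMin {V : Type*} (G : SimpleGraph V) : ℕ :=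
  sInf {m | ∃ S : Set V, IsSkewZFS G S ∧ S.ncard = skewZ G ∧ m = skewPt G S}

/-- `rK₂`: the disjoint union of `r` copies of `K₂`. -/
def rK2 (r : ℕ) : SimpleGraph (Fin r × Fin 2) :=
  SimpleGraph.fromRel (fun a b => a.1 = b.1)

/-- Disjoint union of two simple graphs. -/
def disjUnion {α β : Type*} (G : SimpleGraph α) (H : SimpleGraph β) :
    SimpleGraph (α ⊕ β) :=
  SimpleGraph.fromRel (fun x y =>
    match x, y with
    | Sum.inl a, Sum.inl b => G.Adj a b
    | Sum.inr a, Sum.inr b => H.Adj a b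
    | _, _ => False)

/-- The corona `G ∘ K₁`: attach a pendant leaf to every vertex of `G`. -/
def coronaK1 {α : Type*} (G : SimpleGraph α) : SimpleGraph (α ⊕ α) :=
  SimpleGraph.fromRel (fun x y =>
    match x, y with
    | Sum.inl a, Sum.inl b => G.Adj a b
    | Sum.inl a, Sum.inr b => a = b
    | _, _ => False)

/-- The corona `G ∘ K₂`: attach a private copy of `K₂` (a triangle) to every
vertex of `G`. -/
def coronaK2 {α : Type*} (G : SimpleGraph α) : SimpleGraph (α ⊕ α × Fin 2) :=
  SimpleGraph.fromRel (fun x y =>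
    match x, y with
    | Sum.inl a, Sum.inl b => G.Adj a b
    | Sum.inl a, Sum.inr b => a = b.1
    | Sum.inr a, Sum.inr b => a.1 = b.1
    | _, _ => False)

/-- The graph `H(s,t)` with hub `b`, pendant paths `b xᵢ yᵢ` and triangles `b zᵢ wᵢ`. -/
def Hgraph (s t : ℕ) : SimpleGraph (Unit ⊕ ((Fin s × Fin 2) ⊕ (Fin t × Fin 2))) :=
  SimpleGraph.fromRel (fun x y =>
    match x, y with
    | Sum.inl _, Sum.inr (Sum.inl p) => p.2 = 0
    | Sum.inl _, Sum.inr (Sum.inr _) => True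
    | Sum.inr (Sum.inl p), Sum.inr (Sum.inl q) => p.1 = q.1
    | Sum.inr (Sum.inr p), Sum.inr (Sum.inr q) => p.1 = q.1
    | _, _ => False)

/-- The friendship graph `Fₙ`: a universal vertex joined to `n` disjoint copies of `K₂`. -/
def friendshipGraph (n : ℕ) : SimpleGraph (Unit ⊕ (Fin n × Fin 2)) :=
  SimpleGraph.fromRel (fun x y =>
    match x, y with
    | Sum.inl _, Sum.inr _ => True
    | Sum.inr p, Sum.inr q => p.1 = q.1
    | _, _ => False)

/-- The balanced spider `T_{p,ℓ}`: a center with `p` legs of `ℓ` vertices each. -/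
def spider (p ℓ : ℕ) : SimpleGraph (Unit ⊕ (Fin p × Fin ℓ)) :=
  SimpleGraph.fromRel (fun x y =>
    match x, y with
    | Sum.inl _, Sum.inr q => q.2.val = 0
    | Sum.inr q, Sum.inr q' => q.1 = q'.1 ∧ q'.2.val = q.2.val + 1
    | _, _ => False)

/-- The hypercube graph `Qₙ`: binary strings of length `n`, adjacent iff they
differ in exactly one coordinate. -/
def hypercube (n : ℕ) : SimpleGraph (Fin n → Bool) :=
  SimpleGraph.fromRel (fun x y => ∃! i, x i ≠ y i)

/-
Each round of an unfinished skew forcing process colors a new vertex (a round coloring nothing is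
a fixed point), so `|S| + pt₋(G;S) ≤ |V|`; for a minimum set realizing `pt₋(G)` this reads
`Z₋(G) + pt₋(G) ≤ |V|`. Now take `T` realizing `th₋(G)`. If `|T| = Z₋(G)`, then
`pt₋(G;T) ≥ pt₋(G)`. If `pt₋(G;T) = 0`, then `T = V` and `|T| ≥ Z₋(G) + pt₋(G)`. Otherwise
`|T| + pt₋(G;T) ≥ Z₋(G) + 2 ≥ Z₋(G) + pt₋(G)`. The reverse inequality is witnessed by a
minimum set realizing `pt₋(G)`.
-/

section SkewForcing

variable {V : Type*} (G : SimpleGraph V)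

lemma subset_skewStep (B : Set V) : B ⊆ skewStep G B :=
  Set.subset_union_left

lemma skewIter_add (S : Set V) (n k : ℕ) :
    skewIter G S (n + k) = skewIter G (skewIter G S n) k := by
  induction k with
  | zero => rfl
  | succ k ih => rw [← Nat.add_assoc, skewIter, ih, skewIter]

lemma skewIter_of_skewStep_eq {B : Set V} (hB : skewStep G B = B) (k : ℕ) :
    skewIter G B k = B := by
  induction k with
  | zero => rfl
  | succ k ih => rw [skewIter, ih, hB]

lemma skewIter_monotone (S : Set V) : Monotone (skewIter G S) :=
  monotone_nat_of_le_succ fun n => subset_skewStep G (skewIter G S n)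

lemma skewIter_ssubset_succ {S : Set V} (hS : IsSkewZFS G S) {n : ℕ}
    (hn : skewIter G S n ≠ Set.univ) : skewIter G S n ⊂ skewIter G S (n + 1) := by
  refine (subset_skewStep G _).ssubset_of_ne fun hfix => hn ?_
  obtain ⟨m, hm⟩ := hS
  rw [← skewIter_of_skewStep_eq G hfix.symm m, ← skewIter_add, Set.eq_univ_iff_forall]
  exact fun v => skewIter_monotone G S (Nat.le_add_left m n) (hm ▸ Set.mem_univ v)

lemma skewIter_skewPt {S : Set V} (hS : IsSkewZFS G S) :
    skewIter G S (skewPt G S) = Set.univ :=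
  Nat.sInf_mem hS

lemma skewPt_add_ncard_le [Finite V] {S : Set V} (hS : IsSkewZFS G S) :
    S.ncard + skewPt G S ≤ Nat.card V := by
  have hgrow : ∀ n ≤ skewPt G S, S.ncard + n ≤ (skewIter G S n).ncard := by
    intro n hn
    induction n with
    | zero => rfl
    | succ n ih =>
      have hne : skewIter G S n ≠ Set.univ := Nat.notMem_of_lt_sInf hn
      have := Set.ncard_lt_ncard (skewIter_ssubset_succ G hS hne)
      omega
  calc S.ncard + skewPt G S ≤ (skewIter G S (skewPt G S)).ncard := hgrow _ le_rfl
    _ = Nat.card V := by rw [skewIter_skewPt G hS, Set.ncard_univ]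

lemma skewZ_le {S : Set V} (hS : IsSkewZFS G S) : skewZ G ≤ S.ncard :=
  Nat.sInf_le ⟨S, hS, rfl⟩

lemma skewPtMin_le {S : Set V} (hS : IsSkewZFS G S) (hcard : S.ncard = skewZ G) :
    skewPtMin G ≤ skewPt G S :=
  Nat.sInf_le ⟨S, hS, hcard, rfl⟩

lemma skewTh_le {S : Set V} (hS : IsSkewZFS G S) : skewTh G ≤ S.ncard + skewPt G S :=
  Nat.sInf_le ⟨S, hS, rfl⟩

lemma isSkewZFS_univ : IsSkewZFS G Set.univ :=
  ⟨0, rfl⟩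

lemma exists_isSkewZFS_ncard_eq_skewZ : ∃ S, IsSkewZFS G S ∧ S.ncard = skewZ G := by
  obtain ⟨S, hS, hcard⟩ := Nat.sInf_mem (⟨_, Set.univ, isSkewZFS_univ G, rfl⟩ :
    {m | ∃ S : Set V, IsSkewZFS G S ∧ m = S.ncard}.Nonempty)
  exact ⟨S, hS, hcard.symm⟩

lemma exists_isSkewZFS_skewPt_eq_skewPtMin :
    ∃ S, IsSkewZFS G S ∧ S.ncard = skewZ G ∧ skewPt G S = skewPtMin G := by
  obtain ⟨S₀, hS₀, hcard₀⟩ := exists_isSkewZFS_ncard_eq_skewZ G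
  obtain ⟨S, hS, hcard, hpt⟩ := Nat.sInf_mem (⟨_, S₀, hS₀, hcard₀, rfl⟩ :
    {m | ∃ S : Set V, IsSkewZFS G S ∧ S.ncard = skewZ G ∧ m = skewPt G S}.Nonempty)
  exact ⟨S, hS, hcard, hpt.symm⟩

lemma exists_isSkewZFS_ncard_add_skewPt_eq_skewTh :
    ∃ S, IsSkewZFS G S ∧ S.ncard + skewPt G S = skewTh G := by
  obtain ⟨S, hS, hth⟩ := Nat.sInf_mem (⟨_, Set.univ, isSkewZFS_univ G, rfl⟩ :
    {m | ∃ S : Set V, IsSkewZFS G S ∧ m = S.ncard + skewPt G S}.Nonempty)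
  exact ⟨S, hS, hth.symm⟩

lemma skewTh_le_skewZ_add_skewPtMin : skewTh G ≤ skewZ G + skewPtMin G := by
  obtain ⟨S, hS, hcard, hpt⟩ := exists_isSkewZFS_skewPt_eq_skewPtMin G
  simpa only [hcard, hpt] using skewTh_le G hS

lemma skewZ_add_skewPtMin_le_card [Finite V] : skewZ G + skewPtMin G ≤ Nat.card V := by
  obtain ⟨S, hS, hcard, hpt⟩ := exists_isSkewZFS_skewPt_eq_skewPtMin G
  simpa only [hcard, hpt] using skewPt_add_ncard_le G hS

lemma skewZ_add_min_skewPtMin_two_le_skewTh [Finite V] :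
    skewZ G + min (skewPtMin G) 2 ≤ skewTh G := by
  obtain ⟨T, hT, hth⟩ := exists_isSkewZFS_ncard_add_skewPt_eq_skewTh G
  rw [← hth]
  rcases (skewZ_le G hT).eq_or_lt with hcard | hlt
  · have := skewPtMin_le G hT hcard.symm
    omega
  rcases Nat.eq_zero_or_pos (skewPt G T) with hpt | hpt
  · have hT_univ : T = Set.univ := by simpa only [hpt, skewIter] using skewIter_skewPt G hT
    have := skewZ_add_skewPtMin_le_card G
    rw [hT_univ, Set.ncard_univ]
    omega
  · omega

end SkewForcing

/-- if `pt₋(G) ≤ 2` then `th₋(G) = Z₋(G) + pt₋(G)`. -/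
theorem skewTh_eq_of_small_pt {V : Type*} [Fintype V] (G : SimpleGraph V)
    (h : skewPtMin G ≤ 2) :
    skewTh G = skewZ G + skewPtMin G := by
  refine le_antisymm (skewTh_le_skewZ_add_skewPtMin G) ?_
  simpa only [min_eq_left h] using skewZ_add_min_skewPtMin_two_le_skewTh G
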